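/- For the softmax distribution q_i(λ) = exp(δ_i/λ)/Z(λ) with λ > 0, the derivative of the Shannon entropy H(Q(λ)) with respect to λ equals Var_{Q(λ)}(δ)/λ³, which is nonnegative. -/

import Mathlib

open Real Finset Filter Topology

noncomputable def Z (n : ℕ) (δ : Fin n → ℝ) (t : ℝ) : ℝ := ∑ j, Real.exp (δ j / t)
noncomputable def q (n : ℕ) (δ : Fin n → ℝ) (t : ℝ) (i : Fin n) : ℝ :=
  Real.exp (δ i / t) / Z n δ t
noncomputable def Egap (n : ℕ) (δ : Fin n → ℝ) (t : ℝ) : ℝ := ∑ i, q n δ t i * δ i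
noncomputable def Hent (n : ℕ) (δ : Fin n → ℝ) (t : ℝ) : ℝ :=
  -∑ i, q n δ t i * Real.log (q n δ t i)
noncomputable def Vr (n : ℕ) (δ : Fin n → ℝ) (t : ℝ) : ℝ :=
  (∑ i, q n δ t i * (δ i) ^ 2) - (Egap n δ t) ^ 2

/-!
Since `log q_i = δ_i/λ - log Z`, the entropy is `H = log Z - E/λ` with `E` the mean
of `δ`. Differentiating the exponentials gives `Z' = -Z E/λ²` and `E' = -Var/λ²`, so
`H' = -E/λ² - E'/λ + E/λ² = Var/λ³`. The variance is nonnegative by Jensen's inequality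
for `x ↦ x²`.
-/

theorem hasDerivAt_exp_div {a t : ℝ} (ht : t ≠ 0) :
    HasDerivAt (fun s => exp (a / s)) (-(exp (a / t) * a) / t ^ 2) t := by
  have h := ((hasDerivAt_inv ht).const_mul a).exp
  rw [show -(exp (a / t) * a) / t ^ 2 = exp (a / t) * (a * -(t ^ 2)⁻¹) by ring]
  simpa only [div_eq_mul_inv] using h

theorem hasDerivAt_sum_exp_div_mul {ι : Type*} [Fintype ι] (δ f : ι → ℝ) {t : ℝ}
    (ht : t ≠ 0) :
    HasDerivAt (fun s => ∑ i, exp (δ i / s) * f i)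
      (-(∑ i, exp (δ i / t) * (δ i * f i)) / t ^ 2) t := by
  refine (HasDerivAt.fun_sum (u := univ) fun i _ =>
    (hasDerivAt_exp_div (a := δ i) ht).mul_const (f i)).congr_deriv ?_
  rw [neg_div, sum_div, ← sum_neg_distrib]
  exact sum_congr rfl fun i _ => by ring

theorem Z_pos {n : ℕ} (hn : 0 < n) (δ : Fin n → ℝ) (t : ℝ) : 0 < Z n δ t :=
  haveI : Nonempty (Fin n) := Fin.pos_iff_nonempty.mp hn
  sum_pos (fun _ _ => exp_pos _) univ_nonempty

theorem sum_q_eq_one {n : ℕ} (hn : 0 < n) (δ : Fin n → ℝ) (t : ℝ) :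
    ∑ i, q n δ t i = 1 := by
  simp only [q, ← sum_div]
  exact div_self (Z_pos hn δ t).ne'

theorem sum_q_mul_eq_div_Z {n : ℕ} (δ f : Fin n → ℝ) (t : ℝ) :
    ∑ i, q n δ t i * f i = (∑ i, exp (δ i / t) * f i) / Z n δ t := by
  simp only [q, div_mul_eq_mul_div, sum_div]

theorem hasDerivAt_Z {n : ℕ} (δ : Fin n → ℝ) {t : ℝ} (ht : t ≠ 0) :
    HasDerivAt (Z n δ) (-(∑ i, exp (δ i / t) * δ i) / t ^ 2) t := by
  show HasDerivAt (fun s => ∑ i, exp (δ i / s)) _ t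
  simpa using hasDerivAt_sum_exp_div_mul δ 1 ht

theorem hasDerivAt_log_Z {n : ℕ} (hn : 0 < n) (δ : Fin n → ℝ) {t : ℝ} (ht : t ≠ 0) :
    HasDerivAt (fun s => log (Z n δ s)) (-Egap n δ t / t ^ 2) t := by
  refine ((hasDerivAt_Z δ ht).log (Z_pos hn δ t).ne').congr_deriv ?_
  rw [Egap, sum_q_mul_eq_div_Z]
  ring

theorem hasDerivAt_Egap {n : ℕ} (hn : 0 < n) (δ : Fin n → ℝ) {t : ℝ} (ht : t ≠ 0) :
    HasDerivAt (Egap n δ) (-Vr n δ t / t ^ 2) t := by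
  have hZ := Z_pos hn δ t
  have hEgap : Egap n δ = fun s => (∑ i, exp (δ i / s) * δ i) / Z n δ s := by
    funext s
    exact sum_q_mul_eq_div_Z δ δ s
  have hVr : Vr n δ t = (∑ i, exp (δ i / t) * δ i ^ 2) / Z n δ t
      - ((∑ i, exp (δ i / t) * δ i) / Z n δ t) ^ 2 := by
    rw [Vr, Egap, sum_q_mul_eq_div_Z, sum_q_mul_eq_div_Z]
  have hB : HasDerivAt (fun s => ∑ i, exp (δ i / s) * δ i)
      (-(∑ i, exp (δ i / t) * δ i ^ 2) / t ^ 2) t := by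
    simpa only [← sq] using hasDerivAt_sum_exp_div_mul δ δ ht
  rw [hEgap]
  refine (hB.div (hasDerivAt_Z δ ht) hZ.ne').congr_deriv ?_
  rw [hVr]
  field_simp
  ring

theorem Hent_eq_log_Z_sub_Egap_div {n : ℕ} (hn : 0 < n) (δ : Fin n → ℝ) (t : ℝ) :
    Hent n δ t = log (Z n δ t) - Egap n δ t / t := by
  have hZ := Z_pos hn δ t
  have hlog : ∀ i, log (q n δ t i) = δ i / t - log (Z n δ t) := fun i => by
    rw [q, log_div (exp_pos _).ne' hZ.ne', log_exp]
  simp only [Hent, Egap, hlog, mul_sub, sum_sub_distrib, ← sum_mul, sum_q_eq_one hn]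
  simp only [mul_div_assoc', sum_div]
  ring

theorem Vr_nonneg {n : ℕ} (hn : 0 < n) (δ : Fin n → ℝ) (t : ℝ) : 0 ≤ Vr n δ t :=
  sub_nonneg.mpr <| pow_arith_mean_le_arith_mean_pow_of_even univ _ _
    (fun _ _ => div_nonneg (exp_pos _).le (Z_pos hn δ t).le) (sum_q_eq_one hn δ t) even_two

theorem stmt_3 (n : ℕ) (hn : 0 < n) (δ : Fin n → ℝ) (t : ℝ) (ht : 0 < t) :
    HasDerivAt (Hent n δ) (Vr n δ t / t ^ 3) t ∧ 0 ≤ Vr n δ t / t ^ 3 := by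
  refine ⟨?_, div_nonneg (Vr_nonneg hn δ t) (by positivity)⟩
  rw [show Hent n δ = fun s => log (Z n δ s) - Egap n δ s / s from
    funext (Hent_eq_log_Z_sub_Egap_div hn δ)]
  refine ((hasDerivAt_log_Z hn δ ht.ne').sub
    ((hasDerivAt_Egap hn δ ht.ne').div (hasDerivAt_id' t) ht.ne')).congr_deriv ?_
  field_simp
  ring
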